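/- Let n and m be positive integers with 5 ≤ n ≤ 2m+1 and n − m odd, and set d = ⌊(n−m)/2⌋. Suppose σ ∈ S_n is a product of d + 1 disjoint cycles of the form (i_1,j_1)(i_2,j_2)⋯(i_d,j_d)(k_1,…,k_{n−2d}), where {i_1,…,i_d} ⊆ {1,…,d+1}, {j_1,…,j_d} ⊆ {n−d,…,n}, {k_1,…,k_{n−2d}} ⊆ {d+1,…,n−d}, and at least one of d+1 and n−d belongs to {k_1,…,k_{n−2d}}. Then d(1,σ,m) = n + d − 1. -/

import Mathlib

/-!
Upper bound: each transposition `(i_t j_t)` is `(c i_t)(j_t c)(c i_t)` with `c = 2d`, three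
transpositions of width at most `m`, and the middle cycle is the product of the
`n - 2d - 1` transpositions of consecutive `k`'s; together `n + d - 1` factors.

Lower bound: for any word of transpositions, `|α| + #cycles ≤ length + 2 · #components`,
the components being those of the graph whose edges are the transpositions used. Indeed,
appending a transposition changes the number of cycles by one, and when it joins two
components it merges two cycles. For a `G_m`-factorisation of `σ` this graph is connected:
the middle block is one cycle of `σ`, and a path of steps of width at most `m` from `i_t < d`
to `j_t ≥ n - d` cannot jump over the `m + 1` points `d, …, n - d - 1`. Since `σ` has `d + 1`
cycles, every factorisation has length at least `n + (d + 1) - 2`.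
-/

/-- A permutation of `Fin n` is a transposition `(i, j)` with `j - i ≤ m`
(an element of the set `G_m` of the paper). -/
def IsGmTransposition (n m : ℕ) (τ : Equiv.Perm (Fin n)) : Prop :=
  ∃ i j : Fin n, i < j ∧ j.val - i.val ≤ m ∧ τ = Equiv.swap i j

/-- `d(1, σ, m)`: the minimum number of transpositions from `G_m` whose product is `σ`. -/
noncomputable def permDist (n m : ℕ) (σ : Equiv.Perm (Fin n)) : ℕ :=
  sInf {k | ∃ l : List (Equiv.Perm (Fin n)),
    l.length = k ∧ (∀ τ ∈ l, IsGmTransposition n m τ) ∧ l.prod = σ}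

open Equiv Equiv.Perm Function

section Classes

variable {α : Type*} {r s : α → α → Prop} {a b x y : α}

def mergeRel (r : α → α → Prop) (a b : α) (x y : α) : Prop :=
  r x y ∨ ((r x a ∨ r x b) ∧ (r y a ∨ r y b))

theorem mergeRel_of_rel (h : r x y) : mergeRel r a b x y := Or.inl h

theorem mergeRel_self (hr : Equivalence r) : mergeRel r a b a b :=
  Or.inr ⟨Or.inl (hr.refl a), Or.inr (hr.refl b)⟩

theorem Equivalence.mergeRel (hr : Equivalence r) (a b : α) : Equivalence (mergeRel r a b) where
  refl x := mergeRel_of_rel (hr.refl x)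
  symm := fun h => h.imp hr.symm And.symm
  trans := by
    rintro x y z (hxy | ⟨hx, hy⟩) (hyz | ⟨hy', hz⟩)
    · exact Or.inl (hr.trans hxy hyz)
    · exact Or.inr ⟨hy'.imp (hr.trans hxy) (hr.trans hxy), hz⟩
    · exact Or.inr ⟨hx, hy.imp (hr.trans (hr.symm hyz)) (hr.trans (hr.symm hyz))⟩
    · exact Or.inr ⟨hx, hz⟩

theorem mergeRel_le (hs : Equivalence s) (hrs : ∀ x y, r x y → s x y) (hab : s a b)
    (h : mergeRel r a b x y) : s x y := by
  have hU : ∀ z, r z a ∨ r z b → s z a := fun z hz =>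
    hz.elim (hrs z a) fun hzb => hs.trans (hrs z b hzb) (hs.symm hab)
  rcases h with h | ⟨hx, hy⟩
  · exact hrs x y h
  · exact hs.trans (hU x hx) (hs.symm (hU y hy))

noncomputable def numClasses (r : α → α → Prop) : ℕ := Nat.card (Quot r)

variable [Finite α]

theorem numClasses_le_card (r : α → α → Prop) : numClasses r ≤ Nat.card α :=
  Nat.card_le_card_of_surjective _ Quot.mk_surjective

theorem card_le_numClasses {β : Type*} (hr : Equivalence r) (f : β → α)
    (hf : ∀ b b', r (f b) (f b') → b = b') : Nat.card β ≤ numClasses r :=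
  Nat.card_le_card_of_injective (fun b => Quot.mk r (f b)) fun b b' h =>
    hf b b' ((hr.quot_mk_eq_iff _ _).1 h)

theorem numClasses_le_of_le (h : ∀ x y, r x y → s x y) : numClasses s ≤ numClasses r :=
  Nat.card_le_card_of_surjective (Quot.map id h) (Quot.ind fun x => ⟨Quot.mk r x, rfl⟩)

theorem numClasses_le_numClasses_mergeRel_add_one (hr : Equivalence r) (a b : α) :
    numClasses r ≤ numClasses (mergeRel r a b) + 1 := by
  classical
  rw [numClasses, numClasses, ← Finite.card_option]
  refine Nat.card_le_card_of_injective (fun q => if q = Quot.mk r b then none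
    else some (Quot.map id (fun _ _ => mergeRel_of_rel) q)) ?_
  rintro ⟨x⟩ ⟨y⟩ hxy
  simp only [hr.quot_mk_eq_iff] at hxy ⊢
  by_cases hx : r x b <;> by_cases hy : r y b <;>
    simp only [hx, hy, if_true, if_false, reduceCtorEq, Option.some.injEq] at hxy
  · exact hr.trans hx (hr.symm hy)
  · obtain h | ⟨hx', hy'⟩ := ((hr.mergeRel a b).quot_mk_eq_iff x y).1 hxy
    · exact h
    · exact hr.trans (hx'.resolve_right hx) (hr.symm (hy'.resolve_right hy))

theorem numClasses_mergeRel_lt (hr : Equivalence r) (hab : ¬ r a b) :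
    numClasses (mergeRel r a b) < numClasses r := by
  have hsurj : Surjective (Quot.map id (fun _ _ => mergeRel_of_rel) :
      Quot r → Quot (mergeRel r a b)) := Quot.ind fun x => ⟨Quot.mk r x, rfl⟩
  refine lt_of_not_ge fun hle => hab ((hr.quot_mk_eq_iff a b).1 ?_)
  exact (hsurj.bijective_of_nat_card_le hle).1 (Quot.sound (mergeRel_self hr))

end Classes

namespace Equiv.Perm

variable {α : Type*} [Finite α] {π : Perm α} {r : α → α → Prop} {s : Set α} {x y : α}

theorem SameCycle.rel_of_mapsTo (hr : Equivalence r) (hs : Set.MapsTo π s s)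
    (hπ : ∀ z ∈ s, r z (π z)) (hx : x ∈ s) (h : π.SameCycle x y) : r x y := by
  obtain ⟨k, rfl⟩ := h.exists_nat_pow_eq
  clear h
  induction k with
  | zero => exact hr.refl x
  | succ k ih =>
    rw [pow_succ', mul_apply]
    exact hr.trans ih (hπ _ (by rw [coe_pow]; exact hs.iterate k hx))

theorem SameCycle.rel_of_forall (hr : Equivalence r) (hπ : ∀ z, r z (π z))
    (h : π.SameCycle x y) : r x y :=
  h.rel_of_mapsTo hr (Set.mapsTo_univ _ _) (fun z _ => hπ z) (Set.mem_univ x)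

theorem SameCycle.mem_of_mapsTo (hs : Set.MapsTo π s s) (hx : x ∈ s) (h : π.SameCycle x y) :
    y ∈ s := by
  obtain ⟨k, rfl⟩ := h.exists_nat_pow_eq
  rw [coe_pow]
  exact hs.iterate k hx

noncomputable def numCycles (π : Perm α) : ℕ := numClasses π.SameCycle

variable [DecidableEq α] {a b : α}

theorem mergeRel_of_sameCycle_swap_mul (h : (swap a b * π).SameCycle x y) :
    mergeRel π.SameCycle a b x y := by
  refine h.rel_of_forall ((SameCycle.equivalence π).mergeRel a b) fun z => ?_
  have hz : π.SameCycle z (π z) := SameCycle.rfl.apply_right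
  rw [mul_apply]
  by_cases ha : π z = a
  · rw [ha, swap_apply_left]
    exact Or.inr ⟨Or.inl (ha ▸ hz), Or.inr SameCycle.rfl⟩
  by_cases hb : π z = b
  · rw [hb, swap_apply_right]
    exact Or.inr ⟨Or.inr (hb ▸ hz), Or.inl SameCycle.rfl⟩
  rw [swap_apply_of_ne_of_ne ha hb]
  exact mergeRel_of_rel hz

/-- Following `π` from `b`, the product `swap a b * π` agrees with `π` until the
`π`-cycle of `b` closes up, and at that point it jumps to `a`. -/
theorem sameCycle_swap_mul_of_not_sameCycle (hab : ¬ π.SameCycle a b) :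
    (swap a b * π).SameCycle a b := by
  set σ := swap a b * π
  have key : ∀ k : ℕ, σ.SameCycle b ((π ^ k) b) ∨ σ.SameCycle b a := by
    intro k
    induction k with
    | zero => exact Or.inl SameCycle.rfl
    | succ k ih =>
      rw [pow_succ', mul_apply]
      by_cases hk : π ((π ^ k) b) = b
      · rw [hk]
        exact Or.inl SameCycle.rfl
      refine ih.imp_left fun h => ?_
      have hπa : π ((π ^ k) b) ≠ a := fun h' =>
        hab (h' ▸ (sameCycle_pow_right.2 SameCycle.rfl).apply_right).symm
      have hσk : σ ((π ^ k) b) = π ((π ^ k) b) := swap_apply_of_ne_of_ne hπa hk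
      exact hσk ▸ h.apply_right
  have hK : π ((π ^ (orderOf π - 1)) b) = b := by
    rw [← mul_apply, ← pow_succ', Nat.sub_add_cancel (orderOf_pos π), pow_orderOf_eq_one,
      one_apply]
  have hσK : σ ((π ^ (orderOf π - 1)) b) = a := by
    simp only [σ, mul_apply, hK, swap_apply_right]
  rcases key (orderOf π - 1) with h | h
  · exact (hσK ▸ h.apply_right).symm
  · exact h.symm

theorem numCycles_swap_mul_le (π : Perm α) (a b : α) :
    numCycles (swap a b * π) ≤ numCycles π + 1 := by
  have h : ∀ x y, π.SameCycle x y → mergeRel (swap a b * π).SameCycle a b x y :=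
    fun x y hxy => mergeRel_of_sameCycle_swap_mul (by rwa [swap_mul_self_mul])
  exact (numClasses_le_numClasses_mergeRel_add_one (SameCycle.equivalence _) a b).trans
    (Nat.add_le_add_right (numClasses_le_of_le h) 1)

theorem numCycles_swap_mul_lt (hab : ¬ π.SameCycle a b) :
    numCycles (swap a b * π) < numCycles π := by
  set σ := swap a b * π
  have hσ : σ.SameCycle a b := sameCycle_swap_mul_of_not_sameCycle hab
  have hle : ∀ x y, π.SameCycle x y → σ.SameCycle x y := fun x y hxy =>
    mergeRel_le (SameCycle.equivalence σ) (fun _ _ => id) hσ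
      (mergeRel_of_sameCycle_swap_mul (by rwa [swap_mul_self_mul]))
  calc numCycles σ ≤ numClasses (mergeRel π.SameCycle a b) :=
        numClasses_le_of_le fun x y => mergeRel_le (SameCycle.equivalence σ) hle hσ
    _ < numCycles π := numClasses_mergeRel_lt (SameCycle.equivalence π) hab

end Equiv.Perm

theorem SimpleGraph.Reachable.rel_of_adj {V : Type*} {G : SimpleGraph V} {r : V → V → Prop}
    {u v : V} (hr : Equivalence r) (hG : ∀ x y, G.Adj x y → r x y) (h : G.Reachable u v) :
    r u v := by
  rw [SimpleGraph.reachable_iff_reflTransGen] at h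
  induction h with
  | refl => exact hr.refl u
  | tail _ hxy ih => exact hr.trans ih (hG _ _ hxy)

section SwapGraph

open SimpleGraph

variable {α : Type*} [DecidableEq α]

theorem Equiv.eq_or_eq_of_swap_eq {u v a b : α} (huv : u ≠ v) (h : swap u v = swap a b) :
    (u = a ∨ u = b) ∧ (v = a ∨ v = b) := by
  have hu : swap a b u ≠ u := by rw [← h, swap_apply_left]; exact huv.symm
  have hv : swap a b v ≠ v := by rw [← h, swap_apply_right]; exact huv
  exact ⟨(swap_apply_ne_self_iff.1 hu).2, (swap_apply_ne_self_iff.1 hv).2⟩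

def swapGraph (l : List (Perm α)) : SimpleGraph α where
  Adj x y := x ≠ y ∧ swap x y ∈ l
  symm := ⟨fun x y h => ⟨h.1.symm, swap_comm x y ▸ h.2⟩⟩
  loopless := ⟨fun _ h => h.1 rfl⟩

@[simp]
theorem swapGraph_adj {l : List (Perm α)} {x y : α} :
    (swapGraph l).Adj x y ↔ x ≠ y ∧ swap x y ∈ l :=
  Iff.rfl

theorem swapGraph_le_cons (τ : Perm α) (l : List (Perm α)) :
    swapGraph l ≤ swapGraph (τ :: l) :=
  fun _ _ h => swapGraph_adj.2 ⟨h.1, List.mem_cons_of_mem τ h.2⟩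

theorem reachable_swapGraph_apply_prod {l : List (Perm α)} (hl : ∀ τ ∈ l, τ.IsSwap)
    (z : α) :
    (swapGraph l).Reachable z (l.prod z) := by
  induction l with
  | nil => rfl
  | cons τ t ih =>
    obtain ⟨a, b, -, rfl⟩ := hl τ List.mem_cons_self
    refine ((ih fun τ hτ => hl τ (List.mem_cons_of_mem _ hτ)).mono
      (swapGraph_le_cons _ t)).trans ?_
    rw [List.prod_cons, mul_apply]
    by_cases hw : swap a b (t.prod z) = t.prod z
    · rw [hw]
    obtain ⟨-, hwa | hwb⟩ := swap_apply_ne_self_iff.1 hw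
    · refine Adj.reachable (swapGraph_adj.2 ⟨Ne.symm hw, ?_⟩)
      rw [hwa, swap_apply_left]
      exact List.mem_cons_self
    · refine Adj.reachable (swapGraph_adj.2 ⟨Ne.symm hw, ?_⟩)
      rw [hwb, swap_apply_right, swap_comm]
      exact List.mem_cons_self

theorem mergeRel_of_reachable_swapGraph_cons {l : List (Perm α)} {a b x y : α}
    (h : (swapGraph (swap a b :: l)).Reachable x y) :
    mergeRel (swapGraph l).Reachable a b x y := by
  refine h.rel_of_adj ((reachable_is_equivalence _).mergeRel a b) fun u v huv => ?_
  rw [swapGraph_adj] at huv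
  rcases List.mem_cons.1 huv.2 with he | hmem
  · obtain ⟨hu, hv⟩ := eq_or_eq_of_swap_eq huv.1 he
    refine Or.inr ⟨hu.imp ?_ ?_, hv.imp ?_ ?_⟩ <;> rintro rfl <;> rfl
  · exact mergeRel_of_rel (Adj.reachable (swapGraph_adj.2 ⟨huv.1, hmem⟩))

variable [Finite α]

theorem reachable_swapGraph_of_sameCycle {l : List (Perm α)} (hl : ∀ τ ∈ l, τ.IsSwap)
    {x y : α} (h : l.prod.SameCycle x y) : (swapGraph l).Reachable x y :=
  h.rel_of_forall (reachable_is_equivalence _) (reachable_swapGraph_apply_prod hl)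

theorem card_add_numCycles_le {l : List (Perm α)} (hl : ∀ τ ∈ l, τ.IsSwap) :
    Nat.card α + numCycles l.prod ≤
      l.length + 2 * Nat.card (swapGraph l).ConnectedComponent := by
  induction l with
  | nil =>
    have hcomp : Nat.card α ≤ Nat.card (swapGraph ([] : List (Perm α))).ConnectedComponent :=
      card_le_numClasses (reachable_is_equivalence _) id fun x y h =>
        h.rel_of_adj ⟨fun _ => rfl, Eq.symm, Eq.trans⟩ fun _ _ huv =>
          absurd (swapGraph_adj.1 huv).2 List.not_mem_nil
    have := numClasses_le_card (1 : Perm α).SameCycle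
    simp only [List.prod_nil, List.length_nil, numCycles]
    omega
  | cons τ t ih =>
    obtain ⟨a, b, -, rfl⟩ := hl τ List.mem_cons_self
    specialize ih fun τ hτ => hl τ (List.mem_cons_of_mem _ hτ)
    have hmerge : ∀ x y, (swapGraph (swap a b :: t)).Reachable x y →
        mergeRel (swapGraph t).Reachable a b x y := fun _ _ => mergeRel_of_reachable_swapGraph_cons
    rw [List.prod_cons, List.length_cons]
    by_cases hab : (swapGraph t).Reachable a b
    · have hcomp : Nat.card (swapGraph t).ConnectedComponent ≤
          Nat.card (swapGraph (swap a b :: t)).ConnectedComponent :=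
        numClasses_le_of_le fun x y h =>
          mergeRel_le (reachable_is_equivalence _) (fun _ _ => id) hab (hmerge x y h)
      have := numCycles_swap_mul_le t.prod a b
      omega
    · have hcomp : Nat.card (swapGraph t).ConnectedComponent ≤
          Nat.card (swapGraph (swap a b :: t)).ConnectedComponent + 1 :=
        (numClasses_le_numClasses_mergeRel_add_one (reachable_is_equivalence _) a b).trans
          (Nat.add_le_add_right (numClasses_le_of_le hmerge) 1)
      have := numCycles_swap_mul_lt fun h => hab (reachable_swapGraph_of_sameCycle
        (fun τ hτ => hl τ (List.mem_cons_of_mem _ hτ)) h)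
      omega

end SwapGraph

section DisjointSwaps

variable {α : Type*} [DecidableEq α] {d : ℕ} {i j : Fin d → α}

theorem prod_ofFn_swap_apply_of_forall_ne {x : α} (hx : ∀ t, i t ≠ x ∧ j t ≠ x) :
    (List.ofFn fun t => swap (i t) (j t)).prod x = x := by
  have : (List.ofFn fun t => swap (i t) (j t)).prod ∈ MulAction.stabilizer (Perm α) x :=
    Subgroup.list_prod_mem _ fun τ hτ => by
      obtain ⟨t, rfl⟩ := List.mem_ofFn.1 hτ
      exact swap_apply_of_ne_of_ne (hx t).1.symm (hx t).2.symm
  exact this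

theorem pairwise_disjoint_ofFn_swap (hi : Injective i) (hj : Injective j)
    (hij : ∀ t t', i t ≠ j t') : (List.ofFn fun t => swap (i t) (j t)).Pairwise Perm.Disjoint :=
  List.pairwise_ofFn.2 fun t t' htt' => disjoint_swap_swap <| by
    simp [hi.ne htt'.ne, hj.ne htt'.ne, hij t t, hij t t', (hij t' t).symm, hij t' t']

variable [Fintype α]

theorem prod_ofFn_swap_apply_left (hi : Injective i) (hj : Injective j)
    (hij : ∀ t t', i t ≠ j t') (t : Fin d) :
    (List.ofFn fun t => swap (i t) (j t)).prod (i t) = j t := by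
  rw [← eq_on_support_mem_disjoint (List.mem_ofFn.2 ⟨t, rfl⟩)
    (pairwise_disjoint_ofFn_swap hi hj hij) _ (by simp [support_swap (hij t t)]), swap_apply_left]

theorem prod_ofFn_swap_apply_right (hi : Injective i) (hj : Injective j)
    (hij : ∀ t t', i t ≠ j t') (t : Fin d) :
    (List.ofFn fun t => swap (i t) (j t)).prod (j t) = i t := by
  rw [← eq_on_support_mem_disjoint (List.mem_ofFn.2 ⟨t, rfl⟩)
    (pairwise_disjoint_ofFn_swap hi hj hij) _ (by simp [support_swap (hij t t)]), swap_apply_right]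

end DisjointSwaps

theorem List.Nodup.exists_of_mem_zipWith_swap {α : Type*} [DecidableEq α] {l : List α}
    (hl : l.Nodup) {τ : Equiv.Perm α} (hτ : τ ∈ List.zipWith Equiv.swap l l.tail) :
    ∃ x ∈ l, ∃ y ∈ l, x ≠ y ∧ τ = Equiv.swap x y := by
  induction l with
  | nil => simp at hτ
  | cons a t ih =>
    cases t with
    | nil => simp at hτ
    | cons b t =>
      rw [List.tail_cons, List.zipWith_cons_cons, List.mem_cons] at hτ
      rcases hτ with rfl | hτ
      · exact ⟨a, List.mem_cons_self, b, List.mem_cons_of_mem _ List.mem_cons_self,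
          fun hab => (List.nodup_cons.1 hl).1 (hab ▸ List.mem_cons_self), rfl⟩
      · obtain ⟨x, hx, y, hy, hxy, rfl⟩ := ih hl.of_cons hτ
        exact ⟨x, List.mem_cons_of_mem _ hx, y, List.mem_cons_of_mem _ hy, hxy, rfl⟩

theorem List.Nodup.mem_of_card_le {α : Type*} [Fintype α] {l : List α} (hl : l.Nodup)
    (hlen : Fintype.card α ≤ l.length) (x : α) : x ∈ l := by
  classical
  have := Finset.eq_univ_of_card l.toFinset
    ((List.toFinset_card_of_nodup hl).trans (hl.length_le_card.antisymm hlen))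
  exact List.mem_toFinset.1 (this ▸ Finset.mem_univ x)

theorem List.Nodup.mem_of_forall_mem_Ico {n a b : ℕ} {l : List (Fin n)} (hl : l.Nodup)
    (hlen : l.length = b - a) (hmem : ∀ x ∈ l, a ≤ (x : ℕ) ∧ (x : ℕ) < b) {x : Fin n}
    (hax : a ≤ x) (hxb : x < b) : x ∈ l := by
  have hsub : (l.map Fin.val).toFinset ⊆ Finset.Ico a b := fun y hy => by
    obtain ⟨z, hz, rfl⟩ := List.mem_map.1 (List.mem_toFinset.1 hy)
    exact Finset.mem_Ico.2 (hmem z hz)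
  have heq := Finset.eq_of_subset_of_card_le hsub (by
    rw [Nat.card_Ico, List.toFinset_card_of_nodup (hl.map Fin.val_injective), List.length_map,
      hlen])
  obtain ⟨z, hz, hzx⟩ :=
    List.mem_map.1 (List.mem_toFinset.1 (heq ▸ Finset.mem_Ico.2 ⟨hax, hxb⟩))
  exact Fin.ext hzx ▸ hz

section Gm

variable {n m : ℕ}

theorem isGmTransposition_swap {x y : Fin n} (hxy : x ≠ y) (hx : (x : ℕ) ≤ y + m)
    (hy : (y : ℕ) ≤ x + m) : IsGmTransposition n m (swap x y) := by
  rcases lt_or_gt_of_ne hxy with h | h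
  · exact ⟨x, y, h, by omega, rfl⟩
  · exact ⟨y, x, h, by omega, swap_comm x y⟩

theorem IsGmTransposition.isSwap {τ : Perm (Fin n)} (h : IsGmTransposition n m τ) : τ.IsSwap :=
  let ⟨x, y, hxy, _, hτ⟩ := h
  ⟨x, y, hxy.ne, hτ⟩

variable {l : List (Perm (Fin n))}

theorem val_le_add_of_adj_swapGraph (hl : ∀ τ ∈ l, IsGmTransposition n m τ) {u v : Fin n}
    (huv : (swapGraph l).Adj u v) : (v : ℕ) ≤ u + m := by
  obtain ⟨huv, hmem⟩ := swapGraph_adj.1 huv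
  obtain ⟨x, y, hxy, hm, he⟩ := hl _ hmem
  have := Fin.lt_def.1 hxy
  obtain ⟨hu | hu, hv | hv⟩ := eq_or_eq_of_swap_eq huv he <;> subst hu hv <;> omega

theorem exists_reachable_mem_Ico (hl : ∀ τ ∈ l, IsGmTransposition n m τ) {u v : Fin n}
    {a : ℕ} (hu : (u : ℕ) < a) (hv : a ≤ v) (huv : (swapGraph l).Reachable u v) :
    ∃ w : Fin n, a ≤ (w : ℕ) ∧ (w : ℕ) < a + m ∧ (swapGraph l).Reachable u w := by
  classical
  obtain ⟨p⟩ := huv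
  obtain ⟨D, hD, hfst, hsnd⟩ :=
    p.exists_boundary_dart {z | (z : ℕ) < a} hu (by simp only [Set.mem_ofPred_eq]; omega)
  simp only [Set.mem_ofPred_eq, not_lt] at hfst hsnd
  have := val_le_add_of_adj_swapGraph hl D.adj
  exact ⟨D.snd, hsnd, by omega, ⟨p.takeUntil _ (p.dart_snd_mem_support_of_mem_darts hD)⟩⟩

end Gm

structure OddCaseShape (n d : ℕ) (σ : Perm (Fin n)) (i j : Fin d → Fin n) (ks : List (Fin n)) :
    Prop where
  injective_left : Injective i
  injective_right : Injective j
  left_ne_right : ∀ t t', i t ≠ j t'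
  left_notMem : ∀ t, i t ∉ ks
  right_notMem : ∀ t, j t ∉ ks
  nodup : ks.Nodup
  length_eq : ks.length = n - 2 * d
  left_lt : ∀ t, (i t : ℕ) < d + 1
  le_right : ∀ t, n - d - 1 ≤ (j t : ℕ)
  mem_Ico : ∀ x ∈ ks, d ≤ (x : ℕ) ∧ (x : ℕ) < n - d
  eq_prod : σ = (List.ofFn fun t => swap (i t) (j t)).prod * ks.formPerm

namespace OddCaseShape

variable {n m d : ℕ} {σ : Perm (Fin n)} {i j : Fin d → Fin n} {ks : List (Fin n)}

theorem mem_of_le_of_lt (h : OddCaseShape n d σ i j ks) {x : Fin n} (hdx : d ≤ (x : ℕ))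
    (hxn : (x : ℕ) < n - d) : x ∈ ks :=
  h.nodup.mem_of_forall_mem_Ico (by rw [h.length_eq]; omega) h.mem_Ico hdx hxn

theorem val_left_lt (h : OddCaseShape n d σ i j ks) (hn : 2 * d < n) (t : Fin d) :
    (i t : ℕ) < d := by
  have := h.left_lt t
  by_contra hge
  exact h.left_notMem t (h.mem_of_le_of_lt (by omega) (by omega))

theorem le_val_right (h : OddCaseShape n d σ i j ks) (hn : 2 * d < n) (t : Fin d) :
    n - d ≤ (j t : ℕ) := by
  have := h.le_right t
  by_contra hlt
  exact h.right_notMem t (h.mem_of_le_of_lt (by omega) (by omega))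

theorem apply_left (h : OddCaseShape n d σ i j ks) (t : Fin d) : σ (i t) = j t := by
  rw [h.eq_prod, mul_apply, List.formPerm_apply_of_notMem (h.left_notMem t)]
  exact prod_ofFn_swap_apply_left h.injective_left h.injective_right h.left_ne_right t

theorem apply_right (h : OddCaseShape n d σ i j ks) (t : Fin d) : σ (j t) = i t := by
  rw [h.eq_prod, mul_apply, List.formPerm_apply_of_notMem (h.right_notMem t)]
  exact prod_ofFn_swap_apply_right h.injective_left h.injective_right h.left_ne_right t

theorem apply_of_mem (h : OddCaseShape n d σ i j ks) {x : Fin n} (hx : x ∈ ks) :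
    σ x = ks.formPerm x := by
  have hF := List.formPerm_apply_mem_of_mem hx
  rw [h.eq_prod, mul_apply]
  exact prod_ofFn_swap_apply_of_forall_ne fun t =>
    ⟨fun he => h.left_notMem t (he ▸ hF), fun he => h.right_notMem t (he ▸ hF)⟩

theorem eq_left_or_eq_right_or_mem (h : OddCaseShape n d σ i j ks) (hn : 2 * d ≤ n)
    (x : Fin n) : (∃ t, i t = x) ∨ (∃ t, j t = x) ∨ x ∈ ks := by
  have hnd : (List.ofFn i ++ List.ofFn j ++ ks).Nodup := by
    simp only [List.nodup_append, List.nodup_ofFn, List.mem_append, List.mem_ofFn]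
    refine ⟨⟨h.injective_left, h.injective_right, ?_⟩, h.nodup, ?_⟩
    · rintro _ ⟨t, rfl⟩ _ ⟨t', rfl⟩
      exact h.left_ne_right t t'
    · rintro _ (⟨t, rfl⟩ | ⟨t, rfl⟩) y hy rfl
      exacts [h.left_notMem t hy, h.right_notMem t hy]
  simpa only [List.mem_append, List.mem_ofFn, or_assoc] using
    hnd.mem_of_card_le (by
      simp only [List.length_append, List.length_ofFn, h.length_eq, Fintype.card_fin]
      omega) x

theorem sameCycle_of_mem (h : OddCaseShape n d σ i j ks) (hks : 2 ≤ ks.length) {x y : Fin n}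
    (hx : x ∈ ks) (hy : y ∈ ks) : σ.SameCycle x y := by
  have hF : ks.formPerm.SameCycle x y := by
    rcases eq_or_ne x y with rfl | hxy
    · exact SameCycle.rfl
    · have : Std.Symm ks.formPerm.SameCycle := ⟨fun _ _ => SameCycle.symm⟩
      exact (List.pairwise_sameCycle_formPerm h.nodup hks).forall hx hy hxy
  refine hF.rel_of_mapsTo (s := {z | z ∈ ks}) (SameCycle.equivalence σ)
    (fun z hz => List.formPerm_apply_mem_of_mem hz) (fun z hz => ?_) hx
  rw [← h.apply_of_mem hz]
  exact SameCycle.rfl.apply_right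

theorem add_one_le_numCycles (h : OddCaseShape n d σ i j ks) (hn : 2 * d < n) :
    d + 1 ≤ numCycles σ := by
  obtain ⟨k, hk⟩ := List.exists_mem_of_length_pos (by rw [h.length_eq]; omega)
  have hpair : ∀ t y, σ.SameCycle (i t) y → y = i t ∨ y = j t := fun t y hy =>
    hy.mem_of_mapsTo (s := {i t, j t}) (by
      rintro z (rfl | rfl)
      exacts [Or.inr (h.apply_left t), Or.inl (h.apply_right t)]) (Or.inl rfl)
  have hk' : ∀ t, ¬ σ.SameCycle (i t) k := fun t hs =>
    (hpair t k hs).elim (fun he => h.left_notMem t (he ▸ hk))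
      fun he => h.right_notMem t (he ▸ hk)
  simpa [numCycles] using
    card_le_numClasses (SameCycle.equivalence σ) (fun o : Option (Fin d) => o.elim k i) (by
    rintro (_ | t) (_ | t') hs
    · rfl
    · exact absurd hs.symm (hk' t')
    · exact absurd hs (hk' t)
    · rcases hpair t _ hs with he | he
      · rw [h.injective_left he]
      · exact absurd he (h.left_ne_right t' t))

theorem preconnected_swapGraph (h : OddCaseShape n d σ i j ks) (hm : 0 < m)
    (hnmd : n = m + 2 * d + 1) {l : List (Perm (Fin n))}
    (hl : ∀ τ ∈ l, IsGmTransposition n m τ) (hprod : l.prod = σ) :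
    (swapGraph l).Preconnected := by
  have hreach : ∀ {x y}, σ.SameCycle x y → (swapGraph l).Reachable x y := fun hxy =>
    reachable_swapGraph_of_sameCycle (fun τ hτ => (hl τ hτ).isSwap) (hprod ▸ hxy)
  have hks : 2 ≤ ks.length := by rw [h.length_eq]; omega
  obtain ⟨k, hk⟩ := List.exists_mem_of_length_pos (by omega : 0 < ks.length)
  have hij : ∀ t, (swapGraph l).Reachable (i t) (j t) := fun t =>
    hreach (h.apply_left t ▸ SameCycle.rfl.apply_right)
  have hleft : ∀ t, (swapGraph l).Reachable (i t) k := fun t => by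
    obtain ⟨w, hdw, hwm, hw⟩ := exists_reachable_mem_Ico hl (h.val_left_lt (by omega) t)
      (by have := h.le_val_right (by omega) t; omega) (hij t)
    exact hw.trans (hreach (h.sameCycle_of_mem hks (h.mem_of_le_of_lt hdw (by omega)) hk))
  have hall : ∀ x, (swapGraph l).Reachable x k := fun x => by
    rcases h.eq_left_or_eq_right_or_mem (by omega) x with ⟨t, rfl⟩ | ⟨t, rfl⟩ | hx
    · exact hleft t
    · exact (hij t).symm.trans (hleft t)
    · exact hreach (h.sameCycle_of_mem hks hx hk)
  exact fun x y => (hall x).trans (hall y).symm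

theorem le_length (h : OddCaseShape n d σ i j ks) (hm : 0 < m) (hnmd : n = m + 2 * d + 1)
    {l : List (Perm (Fin n))} (hl : ∀ τ ∈ l, IsGmTransposition n m τ) (hprod : l.prod = σ) :
    n + d - 1 ≤ l.length := by
  have hbound := card_add_numCycles_le fun τ hτ => (hl τ hτ).isSwap
  have hcomp : Nat.card (swapGraph l).ConnectedComponent ≤ 1 :=
    Finite.card_le_one_iff_subsingleton.2
      (h.preconnected_swapGraph hm hnmd hl hprod).subsingleton_connectedComponent
  have hcyc := h.add_one_le_numCycles (by omega)
  rw [hprod, Nat.card_eq_fintype_card, Fintype.card_fin] at hbound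
  omega

theorem exists_word (h : OddCaseShape n d σ i j ks) (hnmd : n = m + 2 * d + 1)
    (hdm : 2 * d ≤ m) : ∃ l : List (Perm (Fin n)), l.length = n + d - 1 ∧
      (∀ τ ∈ l, IsGmTransposition n m τ) ∧ l.prod = σ := by
  let c : Fin n := ⟨2 * d, by omega⟩
  have hc : (c : ℕ) = 2 * d := rfl
  have hic : ∀ t, i t ≠ c := fun t he => by
    have := h.left_lt t; have := t.pos; rw [Fin.ext_iff] at he; omega
  have hjc : ∀ t, j t ≠ c := fun t he => by
    have := h.le_right t; have := t.pos; rw [Fin.ext_iff] at he; omega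
  refine ⟨(List.ofFn fun t => [swap c (i t), swap (j t) c, swap c (i t)]).flatten ++
    List.zipWith swap ks ks.tail, ?_, fun τ hτ => ?_, ?_⟩
  · simp only [List.length_append, List.length_flatten, List.map_ofFn, comp_def, List.length_cons,
      List.length_nil, List.ofFn_const, List.sum_replicate, smul_eq_mul, List.length_zipWith,
      List.length_tail, h.length_eq]
    omega
  · rcases List.mem_append.1 hτ with hτ | hτ
    · obtain ⟨L, hL, hτ⟩ := List.mem_flatten.1 hτ
      obtain ⟨t, rfl⟩ := List.mem_ofFn.1 hL
      have := h.left_lt t; have := h.le_right t; have := (j t).isLt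
      simp only [List.mem_cons, List.not_mem_nil, or_false] at hτ
      rcases hτ with rfl | rfl | rfl
      · exact isGmTransposition_swap (hic t).symm (by omega) (by omega)
      · exact isGmTransposition_swap (hjc t) (by omega) (by omega)
      · exact isGmTransposition_swap (hic t).symm (by omega) (by omega)
    · obtain ⟨x, hx, y, hy, hxy, rfl⟩ := h.nodup.exists_of_mem_zipWith_swap hτ
      have := h.mem_Ico x hx; have := h.mem_Ico y hy
      exact isGmTransposition_swap hxy (by omega) (by omega)
  · have htriple : (List.prod ∘ fun t => [swap c (i t), swap (j t) c, swap c (i t)]) =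
        fun t => swap (i t) (j t) := funext fun t => by
      simp only [comp_apply, List.prod_cons, List.prod_nil, mul_one, ← mul_assoc]
      exact swap_mul_swap_mul_swap (hjc t) (h.left_ne_right t t).symm
    rw [List.prod_append, List.prod_flatten, List.map_ofFn, htriple, h.eq_prod]
    rfl

end OddCaseShape

theorem permDist_eq_of_forall_le {n m k : ℕ} {σ : Perm (Fin n)}
    (hword : ∃ l : List (Perm (Fin n)),
      l.length = k ∧ (∀ τ ∈ l, IsGmTransposition n m τ) ∧ l.prod = σ)
    (hle : ∀ l : List (Perm (Fin n)),
      (∀ τ ∈ l, IsGmTransposition n m τ) → l.prod = σ → k ≤ l.length) :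
    permDist n m σ = k :=
  le_antisymm (Nat.sInf_le hword)
    (le_csInf ⟨k, hword⟩ fun _ ⟨l, hlen, hl, hprod⟩ => hlen ▸ hle l hl hprod)

/-- `Fin n` is `0`-indexed: the paper's points `d + 1` and `n - d` have values `d` and
`n - d - 1`, and its three ranges become `x < d + 1`, `n - d - 1 ≤ x` and `d ≤ x < n - d`. -/
theorem attains_max_odd_case_general (n m d : ℕ) (hm : 0 < m)
    (hn : n ≤ 2 * m + 1) (hodd : Odd (n - m)) (hd : d = (n - m) / 2)
    (σ : Equiv.Perm (Fin n)) (i j : Fin d → Fin n) (ks : List (Fin n))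
    (hinj_i : Function.Injective i) (hinj_j : Function.Injective j)
    (hij : ∀ t t' : Fin d, i t ≠ j t')
    (hiks : ∀ t : Fin d, i t ∉ ks) (hjks : ∀ t : Fin d, j t ∉ ks)
    (hnd : ks.Nodup) (hlen : ks.length = n - 2 * d)
    (hi_range : ∀ t : Fin d, (i t).val < d + 1)
    (hj_range : ∀ t : Fin d, n - d - 1 ≤ (j t).val)
    (hks_range : ∀ x ∈ ks, d ≤ x.val ∧ x.val < n - d)
    (hσ : σ = (List.ofFn fun t : Fin d => Equiv.swap (i t) (j t)).prod * ks.formPerm) :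
    permDist n m σ = n + d - 1 := by
  have hnmd : n = m + 2 * d + 1 := by
    obtain ⟨q, hq⟩ := hodd
    omega
  have h : OddCaseShape n d σ i j ks :=
    ⟨hinj_i, hinj_j, hij, hiks, hjks, hnd, hlen, hi_range, hj_range, hks_range, hσ⟩
  exact permDist_eq_of_forall_le (h.exists_word hnmd (by omega)) fun l hl hprod =>
    h.le_length hm hnmd hl hprod

/-- Let `5 ≤ n ≤ 2m + 1` (with `1 ≤ m ≤ n - 1`), `n - m` odd, and `d = ⌊(n - m)/2⌋`.
Suppose `σ ∈ S_n` is a product of `d + 1` disjoint cycles of the form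
`(i_1, j_1)(i_2, j_2) ⋯ (i_d, j_d)(k_1, …, k_{n-2d})`, where (in `1`-indexed terms)
`{i_1, …, i_d} ⊆ {1, …, d+1}`, `{j_1, …, j_d} ⊆ {n-d, …, n}`,
`{k_1, …, k_{n-2d}} ⊆ {d+1, …, n-d}`, and at least one of `d+1`, `n-d` belongs to
`{k_1, …, k_{n-2d}}`.  Then `d(1, σ, m) = n + d - 1`.  Here `Fin n` is `0`-indexed, so
the elements `d+1` and `n-d` have values `d` and `n-d-1`, and the three ranges become
`{x : x < d+1}`, `{x : n-d-1 ≤ x}` and `{x : d ≤ x < n-d}` respectively. -/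
theorem attains_max_odd_case (n m d : ℕ) (hm : 0 < m) (hmn : m ≤ n - 1)
    (h5 : 5 ≤ n) (hn : n ≤ 2 * m + 1) (hodd : Odd (n - m)) (hd : d = (n - m) / 2)
    (σ : Equiv.Perm (Fin n)) (i j : Fin d → Fin n) (ks : List (Fin n))
    (hinj_i : Function.Injective i) (hinj_j : Function.Injective j)
    (hij : ∀ t t' : Fin d, i t ≠ j t')
    (hiks : ∀ t : Fin d, i t ∉ ks) (hjks : ∀ t : Fin d, j t ∉ ks)
    (hnd : ks.Nodup) (hlen : ks.length = n - 2 * d)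
    (hi_range : ∀ t : Fin d, (i t).val < d + 1)
    (hj_range : ∀ t : Fin d, n - d - 1 ≤ (j t).val)
    (hks_range : ∀ x ∈ ks, d ≤ x.val ∧ x.val < n - d)
    (hkey : ∃ x ∈ ks, x.val = d ∨ x.val = n - d - 1)
    (hσ : σ = (List.ofFn fun t : Fin d => Equiv.swap (i t) (j t)).prod * ks.formPerm) :
    permDist n m σ = n + d - 1 :=
  attains_max_odd_case_general n m d hm hn hodd hd σ i j ks hinj_i hinj_j hij hiks hjks hnd hlen
    hi_range hj_range hks_range hσ
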